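/- If z ∈ ℤ[i] is nonzero and φ(z) ≤ n, then min(|Re z|, |Im z|) ≤ w_{n-1} - 2^{v₂(z)+1}. -/

import Mathlib

/-!
Let `j = v₂(z)` and let `N` be the index in Graves' formula, so both coordinates of `z` are
multiples of `2ʲ` bounded by `2ʲ (w_N - 2)`. By the identity `2ʲ (w_m - 2) = w_{m+2j} - 2^{j+1}`,
a bound `2ʲ (w_m - 2)` on the smaller coordinate with `m + 2j ≤ n - 1` gives the claim.
If `φ(z) = N + 2j + 1` take `m = N`. If `φ(z) = N + 2j`, then
`|Re z| + |Im z| ≤ 2ʲ (w_{N+1} - 3) = 2ʲ (2 (w_{N-1} - 2) + 1)`, and as both coordinates are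
multiples of `2ʲ` the smaller one is at most `2ʲ (w_{N-1} - 2)`; when `N = 0` it is `0`, and
`2^{j+1} ≤ w_{2j-1} ≤ w_{n-1}`.
-/
open GaussianInt

noncomputable section

/-- The sequence w: w_{2k} = 3·2^k, w_{2k+1} = 4·2^k. -/
def w (n : ℕ) : ℤ := if n % 2 = 0 then 3 * 2 ^ (n / 2) else 4 * 2 ^ (n / 2)

/-- 2-adic valuation of gcd(Re z, Im z). -/
def v2 (z : GaussianInt) : ℕ := padicValNat 2 (Int.gcd z.re z.im)

/-- ℓ₁ norm. -/
def l1 (z : GaussianInt) : ℤ := |z.re| + |z.im|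

/-- ℓ∞ norm. -/
def linf (z : GaussianInt) : ℤ := max |z.re| |z.im|

/-- m(z) = min(|Re z|, |Im z|). -/
def mm (z : GaussianInt) : ℤ := min |z.re| |z.im|

/-- The algebraic norm. -/
def Nm (z : GaussianInt) : ℤ := z.re ^ 2 + z.im ^ 2

/-- Graves' formula for the minimal Euclidean function φ on ℤ[i]. -/
def phi (z : GaussianInt) : ℕ :=
  let j := v2 z
  let n := sInf {n : ℕ | |z.re| ≤ 2 ^ j * (w n - 2) ∧ |z.im| ≤ 2 ^ j * (w n - 2)}
  if l1 z ≤ 2 ^ j * (w (n + 1) - 3) then n + 2 * j else n + 2 * j + 1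

/-- Nearest integer, rounding halves down. -/
def nint (x : ℚ) : ℤ := if x - ⌊x⌋ ≤ 1 / 2 then ⌊x⌋ else ⌈x⌉

/-- Gauss quotient: coordinatewise nearest-integer rounding of a·conj(b)/Nm(b). -/
def gq (a b : GaussianInt) : GaussianInt :=
  ⟨nint (((a.re * b.re + a.im * b.im : ℤ) : ℚ) / ((b.re ^ 2 + b.im ^ 2 : ℤ) : ℚ)),
   nint (((a.im * b.re - a.re * b.im : ℤ) : ℚ) / ((b.re ^ 2 + b.im ^ 2 : ℤ) : ℚ))⟩

/-- Gauss remainder. -/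
def gr (a b : GaussianInt) : GaussianInt := a - gq a b * b

/-- The imaginary unit in ℤ[i]. -/
def Ii : GaussianInt := ⟨0, 1⟩

/-- The canonical unit u_z. -/
def uz (z : GaussianInt) : GaussianInt :=
  if |z.re| > |z.im| then (if 0 < z.re then 1 else -1)
  else if |z.im| > |z.re| then (if 0 < z.im then -Ii else Ii)
  else if 0 < z.re then (if 0 < z.im then 1 else Ii)
  else (if 0 < z.im then -Ii else -1)

/-- s(z) = sgn(Im(u_z·z)). -/
def sfun (z : GaussianInt) : ℤ := Int.sign ((uz z * z).im)

lemma w_two_mul (k : ℕ) : w (2 * k) = 3 * 2 ^ k := by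
  simp [w]

lemma w_two_mul_add_one (k : ℕ) : w (2 * k + 1) = 4 * 2 ^ k := by
  simp [w, Nat.add_mod, Nat.add_div]

lemma w_add_two (n : ℕ) : w (n + 2) = 2 * w n := by
  obtain ⟨k, rfl | rfl⟩ := Nat.even_or_odd' n
  · rw [show 2 * k + 2 = 2 * (k + 1) by ring, w_two_mul, w_two_mul]; ring
  · rw [show 2 * k + 1 + 2 = 2 * (k + 1) + 1 by ring, w_two_mul_add_one, w_two_mul_add_one]; ring

lemma w_add_two_mul (n j : ℕ) : w (n + 2 * j) = 2 ^ j * w n := by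
  induction j with
  | zero => simp
  | succ k ih => rw [show n + 2 * (k + 1) = n + 2 * k + 2 by ring, w_add_two, ih, pow_succ]; ring

lemma w_monotone : Monotone w := by
  refine monotone_nat_of_le_succ fun n => ?_
  obtain ⟨k, rfl | rfl⟩ := Nat.even_or_odd' n
  · rw [w_two_mul, w_two_mul_add_one]; gcongr; norm_num
  · rw [show 2 * k + 1 + 1 = 2 * (k + 1) by ring, w_two_mul, w_two_mul_add_one, pow_succ]
    nlinarith [pow_pos (two_pos : (0 : ℤ) < 2) k]

lemma two_pow_succ_le_w_two_mul_sub_one (j : ℕ) : (2 : ℤ) ^ (j + 1) ≤ w (2 * j - 1) := by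
  rcases j with _ | j
  · simp [w]
  · rw [show 2 * (j + 1) - 1 = 2 * j + 1 by omega, w_two_mul_add_one, pow_succ, pow_succ]
    linarith

lemma two_pow_mul_w_sub_two (m j : ℕ) : (2 : ℤ) ^ j * (w m - 2) = w (m + 2 * j) - 2 ^ (j + 1) := by
  rw [w_add_two_mul, pow_succ]; ring

lemma le_w_sub_two_pow_of_le {x : ℤ} {m j k : ℕ} (hx : x ≤ 2 ^ j * (w m - 2))
    (hmk : m + 2 * j ≤ k) : x ≤ w k - 2 ^ (j + 1) := by
  rw [two_pow_mul_w_sub_two] at hx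
  linarith [w_monotone hmk]

lemma min_le_of_add_le_of_dvd {a b c d : ℤ} (hd : 0 < d) (ha : d ∣ a) (hb : d ∣ b)
    (hab : a + b ≤ d * (2 * c + 1)) : min a b ≤ d * c := by
  obtain ⟨a, rfl⟩ := ha
  obtain ⟨b, rfl⟩ := hb
  by_contra! h
  have hac : c + 1 ≤ a := by by_contra!; nlinarith [min_le_left (d * a) (d * b)]
  have hbc : c + 1 ≤ b := by by_contra!; nlinarith [min_le_right (d * a) (d * b)]
  nlinarith

lemma two_pow_v2_dvd_re (z : GaussianInt) : (2 : ℤ) ^ v2 z ∣ z.re :=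
  (Int.natCast_dvd_natCast.mpr pow_padicValNat_dvd).trans (Int.gcd_dvd_left _ _)

lemma two_pow_v2_dvd_im (z : GaussianInt) : (2 : ℤ) ^ v2 z ∣ z.im :=
  (Int.natCast_dvd_natCast.mpr pow_padicValNat_dvd).trans (Int.gcd_dvd_right _ _)

def phiIndex (z : GaussianInt) : ℕ :=
  sInf {n : ℕ | |z.re| ≤ 2 ^ v2 z * (w n - 2) ∧ |z.im| ≤ 2 ^ v2 z * (w n - 2)}

lemma phi_eq (z : GaussianInt) : phi z =
    if l1 z ≤ 2 ^ v2 z * (w (phiIndex z + 1) - 3) then phiIndex z + 2 * v2 z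
    else phiIndex z + 2 * v2 z + 1 :=
  rfl

lemma abs_le_two_pow_mul_w_sub_two (z : GaussianInt) :
    |z.re| ≤ 2 ^ v2 z * (w (phiIndex z) - 2) ∧ |z.im| ≤ 2 ^ v2 z * (w (phiIndex z) - 2) := by
  suffices hne : {n : ℕ | |z.re| ≤ 2 ^ v2 z * (w n - 2) ∧ |z.im| ≤ 2 ^ v2 z * (w n - 2)}.Nonempty
    from Nat.sInf_mem hne
  refine ⟨2 * (z.re.natAbs + z.im.natAbs), ?_⟩
  set K := z.re.natAbs + z.im.natAbs
  have hK : (K : ℤ) + 1 ≤ 2 ^ K := by exact_mod_cast Nat.lt_two_pow_self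
  have hj : (1 : ℤ) ≤ 2 ^ v2 z := one_le_pow₀ (by norm_num)
  have hKabs : (K : ℤ) = |z.re| + |z.im| := by simp only [K, Nat.cast_add, Int.natCast_natAbs]
  constructor <;> (simp only [w_two_mul]; nlinarith [abs_nonneg z.re, abs_nonneg z.im])

theorem stmt7_general (z : GaussianInt) (n : ℕ) (h : phi z ≤ n) :
    mm z ≤ w (n - 1) - 2 ^ (v2 z + 1) := by
  have hdvd_re : (2 : ℤ) ^ v2 z ∣ |z.re| := (dvd_abs _ _).mpr (two_pow_v2_dvd_re z)
  have hdvd_im : (2 : ℤ) ^ v2 z ∣ |z.im| := (dvd_abs _ _).mpr (two_pow_v2_dvd_im z)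
  rw [phi_eq] at h
  split_ifs at h with hl1
  · rcases Nat.eq_zero_or_pos (phiIndex z) with hN | hN
    · have hmm : mm z ≤ 2 ^ v2 z * 0 :=
        min_le_of_add_le_of_dvd (by positivity) hdvd_re hdvd_im (by simpa [hN, w, l1] using hl1)
      linarith [w_monotone (show 2 * v2 z - 1 ≤ n - 1 by omega),
        two_pow_succ_le_w_two_mul_sub_one (v2 z)]
    · refine le_w_sub_two_pow_of_le (m := phiIndex z - 1) ?_ (by omega)
      refine min_le_of_add_le_of_dvd (by positivity) hdvd_re hdvd_im ?_
      rw [show phiIndex z + 1 = phiIndex z - 1 + 2 by omega, w_add_two] at hl1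
      linarith [show l1 z = |z.re| + |z.im| from rfl]
  · exact le_w_sub_two_pow_of_le ((min_le_left _ _).trans (abs_le_two_pow_mul_w_sub_two z).1)
      (by omega)

theorem stmt7 (z : GaussianInt) (hz : z ≠ 0) (n : ℕ) (hn : 1 ≤ n) (h : phi z ≤ n) :
    mm z ≤ w (n - 1) - 2 ^ (v2 z + 1) :=
  stmt7_general z n h
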